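/- On 3 unrelated machines under the RANDOM policy, the better-response dynamic does not always converge: there exists a 4-job instance with a cyclic sequence of better response moves. Specifically, with jobs A, B, C, D having processing times (on machines 1,2,3): A: (90, 84, ∞), B: (96, 2, ∞), C: (138, 100, ∞), D: (∞, 254, 300), there is a cycle of 8 better-response moves returning to the starting profile ({A,B} on machine 1, {C} on machine 2, {D} on machine 3). -/
import Mathlib


open scoped ENNReal

/-- RANDOM cost of job `i` in profile `σ`: `p_{i,σ i} + (1/2) Σ_{i'≠i, σ i' = σ i} p_{i',σ i}`
(processing times in `ℝ≥0∞`, with `⊤` meaning the machine is unusable). -/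
noncomputable def rCost4 (p : Fin 4 → Fin 3 → ℝ≥0∞) (σ : Fin 4 → Fin 3) (i : Fin 4) : ℝ≥0∞ :=
  p i (σ i) + (∑ i' ∈ Finset.univ.filter (fun i' => i' ≠ i ∧ σ i' = σ i), p i' (σ i)) / 2

/-- A better response move under RANDOM. -/
def rStep4 (p : Fin 4 → Fin 3 → ℝ≥0∞) (σ σ' : Fin 4 → Fin 3) : Prop :=
  ∃ (i : Fin 4) (b : Fin 3), σ' = Function.update σ i b ∧
    rCost4 p σ' i < rCost4 p σ i

/-- The four-job, three-machine instance of Lemma 3 (jobs A, B, C, D). -/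
noncomputable def pCyc : Fin 4 → Fin 3 → ℝ≥0∞ :=
  ![![90, 84, ⊤], ![96, 2, ⊤], ![138, 100, ⊤], ![⊤, 254, 300]]


private lemma ediv2 (a b : ℝ≥0∞) (h : a = b * 2) : a / 2 = b := by
  rw [h, mul_div_assoc, ENNReal.div_self (by norm_num) (by norm_num), mul_one]

/-- On 3 unrelated machines under RANDOM the better-response dynamic does
not always converge: starting from the profile with jobs A,B on machine 1, C on
machine 2 and D on machine 3, there is a cyclic sequence of 8 better response moves
returning to the starting profile. -/
theorem random_three_unrelated_cycle :
    ∃ f : ℕ → (Fin 4 → Fin 3),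
      f 0 = ![0, 0, 1, 2] ∧ f 8 = f 0 ∧
      ∀ t < 8, rStep4 pCyc (f t) (f (t + 1)) := by
  refine ⟨fun t => match t with
    | 0 => ![0, 0, 1, 2]
    | 1 => ![1, 0, 1, 2]
    | 2 => ![1, 1, 1, 2]
    | 3 => ![1, 1, 0, 2]
    | 4 => ![1, 1, 0, 1]
    | 5 => ![1, 0, 0, 1]
    | 6 => ![0, 0, 0, 1]
    | 7 => ![0, 0, 1, 1]
    | _ => ![0, 0, 1, 2], rfl, rfl, ?_⟩
  intro t ht
  interval_cases t
  · exact ⟨0, 1, by funext j; fin_cases j <;> rfl, by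
      simp [rCost4, pCyc, Finset.sum_filter, Fin.sum_univ_four]
      rw [ediv2 100 50 (by norm_num), ediv2 96 48 (by norm_num)]; norm_num⟩
  · exact ⟨1, 1, by funext j; fin_cases j <;> rfl, by
      simp [rCost4, pCyc, Finset.sum_filter, Fin.sum_univ_four]
      rw [ediv2 (84+100) 92 (by norm_num)]; norm_num⟩
  · exact ⟨2, 0, by funext j; fin_cases j <;> rfl, by
      simp [rCost4, pCyc, Finset.sum_filter, Fin.sum_univ_four]
      rw [ediv2 (84+2) 43 (by norm_num)]; norm_num⟩
  · exact ⟨3, 1, by funext j; fin_cases j <;> rfl, by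
      simp [rCost4, pCyc, Finset.sum_filter, Fin.sum_univ_four]
      rw [ediv2 (84+2) 43 (by norm_num)]; norm_num⟩
  · exact ⟨1, 0, by funext j; fin_cases j <;> rfl, by
      simp [rCost4, pCyc, Finset.sum_filter, Fin.sum_univ_four]
      rw [ediv2 138 69 (by norm_num), ediv2 (84+254) 169 (by norm_num)]; norm_num⟩
  · exact ⟨0, 0, by funext j; fin_cases j <;> rfl, by
      simp [rCost4, pCyc, Finset.sum_filter, Fin.sum_univ_four]
      rw [ediv2 (96+138) 117 (by norm_num), ediv2 254 127 (by norm_num)]; norm_num⟩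
  · exact ⟨2, 1, by funext j; fin_cases j <;> rfl, by
      simp [rCost4, pCyc, Finset.sum_filter, Fin.sum_univ_four]
      rw [ediv2 254 127 (by norm_num), ediv2 (90+96) 93 (by norm_num)]; norm_num⟩
  · exact ⟨3, 2, by funext j; fin_cases j <;> rfl, by
      simp [rCost4, pCyc, Finset.sum_filter, Fin.sum_univ_four]
      rw [ediv2 100 50 (by norm_num)]; norm_num⟩
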